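/- The fixed-point algebra R = (k[x,y]/(x³,y³))^{C₂} in characteristic 3 (with the inversion-type action x ↦ x²+2x, y ↦ y²+2y) is a symmetric k-algebra: the linear form s with s(x²y²) = 1 and s = 0 on the other basis elements {1, x², y², xy+x²y+xy²} has kernel containing no nonzero ideal of R. -/

import Mathlib

/-!
In characteristic `3` we have `4 = 1`, so every fixed point `a` of `t` equals `2 (a + t a)`.
On the monomials `xⁱ yʲ` the map `q ↦ q + t q` takes values in the span of
`1, x², y², m = xy + x²y + xy², w = x²y²`, and these monomials span `Q`; hence the five elements
span `R`. Since `x³ = y³ = 0`, the form `(a, b) ↦ s (a b)` pairs this spanning family with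
`w, y², x², m, 1`, so the coordinates of `a ∈ R` are `s (a w), s (a y²), s (a x²), s (a m), s a`.
They all vanish when `a` lies in an ideal contained in `ker s`.
-/

open MvPolynomial

variable (k : Type*) [Field k]

/-- The local commutative algebra `Q = k[x,y]/(x³, y³)`. -/
abbrev Qalg := MvPolynomial (Fin 2) k ⧸
  Ideal.span {(X 0 : MvPolynomial (Fin 2) k) ^ 3, X 1 ^ 3}

/-- The image of `x` in `Q`. -/
noncomputable def qx : Qalg k := Ideal.Quotient.mk _ (X 0)
/-- The image of `y` in `Q`. -/
noncomputable def qy : Qalg k := Ideal.Quotient.mk _ (X 1)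

/-- The fixed-point subalgebra `R = Q^{C₂}` of the order-2 automorphism `t` of `Q`
(determined by `t(x) = x² + 2x`, `t(y) = y² + 2y`). -/
noncomputable def Req (t : Qalg k →ₐ[k] Qalg k) : Subalgebra k (Qalg k) :=
  AlgHom.equalizer t (AlgHom.id k (Qalg k))

/-- The Jacobson radical of `R`. -/
noncomputable def Jeq (t : Qalg k →ₐ[k] Qalg k) : Ideal ↥(Req k t) :=
  (⊥ : Ideal ↥(Req k t)).jacobson

section

variable {K A : Type*} [CommSemiring K] [CommRing A] [Algebra K A] {x y : A}

variable (K) in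
theorem ofNat_three_eq_zero [CharP K 3] : (3 : A) = 0 := by
  rw [← map_ofNat (algebraMap K A), ← Nat.cast_ofNat, CharP.cast_eq_zero, map_zero]

variable (K x y) in
def fixedSpan : Submodule K A :=
  Submodule.span K {1, x ^ 2, y ^ 2, x * y + x ^ 2 * y + x * y ^ 2, x ^ 2 * y ^ 2}

theorem mem_fixedSpan_iff {q : A} : q ∈ fixedSpan K x y ↔ ∃ d₀ d₁ d₂ d₃ d₄ : K,
    q = d₀ • 1 + d₁ • x ^ 2 + d₂ • y ^ 2 + d₃ • (x * y + x ^ 2 * y + x * y ^ 2) +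
      d₄ • (x ^ 2 * y ^ 2) := by
  simp only [fixedSpan, Submodule.mem_span_insert, Submodule.mem_span_singleton]
  constructor
  · rintro ⟨d₀, _, ⟨d₁, _, ⟨d₂, _, ⟨d₃, _, ⟨d₄, rfl⟩, rfl⟩, rfl⟩, rfl⟩, rfl⟩
    exact ⟨d₀, d₁, d₂, d₃, d₄, by abel⟩
  · rintro ⟨d₀, d₁, d₂, d₃, d₄, rfl⟩
    exact ⟨d₀, _, ⟨d₁, _, ⟨d₂, _, ⟨d₃, _, ⟨d₄, rfl⟩, rfl⟩, rfl⟩, rfl⟩, by abel⟩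

theorem apply_eq_socle_coeff {B : Subalgebra K A} (hx2 : x ^ 2 ∈ B) (hy2 : y ^ 2 ∈ B)
    (hmix : x * y + x ^ 2 * y + x * y ^ 2 ∈ B) (hx2y2 : x ^ 2 * y ^ 2 ∈ B) {s : B →ₗ[K] K}
    (h1 : s ⟨x ^ 2 * y ^ 2, hx2y2⟩ = 1) (h2 : s 1 = 0) (h3 : s ⟨x ^ 2, hx2⟩ = 0)
    (h4 : s ⟨y ^ 2, hy2⟩ = 0) (h5 : s ⟨x * y + x ^ 2 * y + x * y ^ 2, hmix⟩ = 0)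
    (v : B) (d₀ d₁ d₂ d₃ : K) {d₄ : K}
    (hv : (v : A) = d₀ • 1 + d₁ • x ^ 2 + d₂ • y ^ 2 + d₃ • (x * y + x ^ 2 * y + x * y ^ 2) +
      d₄ • (x ^ 2 * y ^ 2)) : s v = d₄ := by
  have hv' : v = d₀ • 1 + d₁ • ⟨x ^ 2, hx2⟩ + d₂ • ⟨y ^ 2, hy2⟩ +
      d₃ • ⟨x * y + x ^ 2 * y + x * y ^ 2, hmix⟩ + d₄ • ⟨x ^ 2 * y ^ 2, hx2y2⟩ :=
    Subtype.ext hv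
  rw [hv']
  simp only [map_add, map_smul, h1, h2, h3, h4, h5, smul_eq_mul]
  ring

variable (hx : x ^ 3 = 0) (hy : y ^ 3 = 0)
include hx hy

theorem pow_mul_pow_add_apply_mem_fixedSpan (h3 : (3 : A) = 0) {τ : A →ₐ[K] A}
    (hτx : τ x = x ^ 2 + 2 * x) (hτy : τ y = y ^ 2 + 2 * y) (i j : ℕ) :
    x ^ i * y ^ j + τ (x ^ i * y ^ j) ∈ fixedSpan K x y := by
  by_cases hij : 3 ≤ i ∨ 3 ≤ j
  · have hzero : x ^ i * y ^ j = 0 := by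
      rcases hij with hi | hj
      · rw [pow_eq_zero_of_le hi hx, zero_mul]
      · rw [pow_eq_zero_of_le hj hy, mul_zero]
    simp [hzero]
  push Not at hij
  obtain ⟨hi, hj⟩ := hij
  rw [map_mul, map_pow, map_pow, hτx, hτy, mem_fixedSpan_iff]
  simp only [Algebra.smul_def]
  -- the nine cases `(i, j)` come in lexicographic order
  interval_cases i <;> interval_cases j
  · exact ⟨2, 0, 0, 0, 0, by grind [map_ofNat]⟩
  · exact ⟨0, 0, 1, 0, 0, by grind [map_ofNat]⟩
  · exact ⟨0, 0, 2, 0, 0, by grind [map_ofNat]⟩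
  · exact ⟨0, 1, 0, 0, 0, by grind [map_ofNat]⟩
  · exact ⟨0, 0, 0, 2, 1, by grind [map_ofNat]⟩
  · exact ⟨0, 0, 0, 0, 1, by grind [map_ofNat]⟩
  · exact ⟨0, 2, 0, 0, 0, by grind [map_ofNat]⟩
  · exact ⟨0, 0, 0, 0, 1, by grind [map_ofNat]⟩
  · exact ⟨0, 0, 0, 0, 2, by grind [map_ofNat]⟩

theorem add_apply_mem_fixedSpan (h3 : (3 : A) = 0) {τ : A →ₐ[K] A}
    (hτx : τ x = x ^ 2 + 2 * x) (hτy : τ y = y ^ 2 + 2 * y)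
    (hgen : Algebra.adjoin K {x, y} = ⊤) (q : A) : q + τ q ∈ fixedSpan K x y := by
  have hq : q ∈ Submodule.span K (Submonoid.closure {x, y} : Set A) := by
    rw [← Algebra.adjoin_eq_span, hgen]
    trivial
  induction hq using Submodule.span_induction with
  | mem q hq =>
    obtain ⟨i, j, rfl⟩ := (Submonoid.mem_closure_pair x y q).1 hq
    exact pow_mul_pow_add_apply_mem_fixedSpan hx hy h3 hτx hτy i j
  | zero => simp
  | add p q _ _ hp hq => simpa [add_add_add_comm] using add_mem hp hq
  | smul c q _ hq => simpa [smul_add] using Submodule.smul_mem _ c hq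

theorem mem_fixedSpan_of_apply_eq (h3 : (3 : A) = 0) {τ : A →ₐ[K] A}
    (hτx : τ x = x ^ 2 + 2 * x) (hτy : τ y = y ^ 2 + 2 * y)
    (hgen : Algebra.adjoin K {x, y} = ⊤) {a : A} (ha : τ a = a) : a ∈ fixedSpan K x y := by
  have h := Submodule.smul_mem _ (2 : K) (add_apply_mem_fixedSpan hx hy h3 hτx hτy hgen a)
  rwa [ha, Algebra.smul_def, map_ofNat, show (2 : A) * (a + a) = a by grind] at h

theorem eq_bot_of_forall_mem_apply_eq_zero {B : Subalgebra K A}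
    (hB : ∀ b ∈ B, b ∈ fixedSpan K x y) (hx2 : x ^ 2 ∈ B) (hy2 : y ^ 2 ∈ B)
    (hmix : x * y + x ^ 2 * y + x * y ^ 2 ∈ B) (hx2y2 : x ^ 2 * y ^ 2 ∈ B) {s : B →ₗ[K] K}
    (h1 : s ⟨x ^ 2 * y ^ 2, hx2y2⟩ = 1) (h2 : s 1 = 0) (h3 : s ⟨x ^ 2, hx2⟩ = 0)
    (h4 : s ⟨y ^ 2, hy2⟩ = 0) (h5 : s ⟨x * y + x ^ 2 * y + x * y ^ 2, hmix⟩ = 0)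
    {I : Ideal B} (hI : ∀ a ∈ I, s a = 0) : I = ⊥ := by
  have hs := apply_eq_socle_coeff hx2 hy2 hmix hx2y2 h1 h2 h3 h4 h5
  rw [eq_bot_iff]
  intro a ha
  obtain ⟨d₀, d₁, d₂, d₃, d₄, hd⟩ := mem_fixedSpan_iff.1 (hB a a.2)
  have hI' (b : B) : s (a * b) = 0 := hI _ (I.mul_mem_right b ha)
  have e₀ : d₀ = 0 := by
    rw [← hI' ⟨_, hx2y2⟩, hs _ 0 0 0 0]
    simp only [Subalgebra.coe_mul, hd, Algebra.smul_def]; grind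
  have e₁ : d₁ = 0 := by
    rw [← hI' ⟨_, hy2⟩, hs _ 0 0 d₀ 0]
    simp only [Subalgebra.coe_mul, hd, Algebra.smul_def]; grind
  have e₂ : d₂ = 0 := by
    rw [← hI' ⟨_, hx2⟩, hs _ 0 d₀ 0 0]
    simp only [Subalgebra.coe_mul, hd, Algebra.smul_def]; grind
  have e₃ : d₃ = 0 := by
    rw [← hI' ⟨_, hmix⟩, hs _ 0 0 0 d₀]
    simp only [Subalgebra.coe_mul, hd, Algebra.smul_def]; grind
  have e₄ : d₄ = 0 := by rw [← hI a ha, hs _ _ _ _ _ hd]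
  exact Subtype.ext (by simp [hd, e₀, e₁, e₂, e₃, e₄])

end

theorem qx_pow_three : qx k ^ 3 = 0 := by
  rw [qx, ← map_pow, Ideal.Quotient.eq_zero_iff_mem]
  exact Ideal.subset_span (by simp)

theorem qy_pow_three : qy k ^ 3 = 0 := by
  rw [qy, ← map_pow, Ideal.Quotient.eq_zero_iff_mem]
  exact Ideal.subset_span (by simp)

theorem adjoin_qx_qy : Algebra.adjoin k {qx k, qy k} = ⊤ := by
  have himage : {qx k, qy k} = Ideal.Quotient.mkₐ k _ '' Set.range X := by
    rw [← Set.range_comp]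
    ext q
    simp [Fin.exists_fin_two, qx, qy, eq_comm]
  rw [himage, Algebra.adjoin_image, adjoin_range_X, Algebra.map_top, AlgHom.range_eq_top]
  exact Ideal.Quotient.mkₐ_surjective k _

/-- In characteristic `3`, the fixed-point algebra `R = (k[x,y]/(x³,y³))^{C₂}` (with the
inversion-type action `x ↦ x² + 2x`, `y ↦ y² + 2y`) is a symmetric `k`-algebra: the
linear form `s` with `s(x²y²) = 1` and `s = 0` on the other basis elements
`{1, x², y², xy + x²y + xy²}` has kernel containing no nonzero ideal of `R`. -/
theorem stmt_16 [CharP k 3] (t : Qalg k →ₐ[k] Qalg k)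
    (ht0 : t (qx k) = qx k ^ 2 + 2 * qx k) (ht1 : t (qy k) = qy k ^ 2 + 2 * qy k)
    (hx2 : qx k ^ 2 ∈ Req k t) (hy2 : qy k ^ 2 ∈ Req k t)
    (hmix : qx k * qy k + qx k ^ 2 * qy k + qx k * qy k ^ 2 ∈ Req k t)
    (hx2y2 : qx k ^ 2 * qy k ^ 2 ∈ Req k t)
    (s : ↥(Req k t) →ₗ[k] k)
    (h1 : s (⟨qx k ^ 2 * qy k ^ 2, hx2y2⟩ : ↥(Req k t)) = 1)
    (h2 : s 1 = 0)
    (h3 : s (⟨qx k ^ 2, hx2⟩ : ↥(Req k t)) = 0)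
    (h4 : s (⟨qy k ^ 2, hy2⟩ : ↥(Req k t)) = 0)
    (h5 : s (⟨qx k * qy k + qx k ^ 2 * qy k + qx k * qy k ^ 2, hmix⟩ : ↥(Req k t)) = 0) :
    ∀ I : Ideal ↥(Req k t), (∀ a ∈ I, s a = 0) → I = ⊥ := by
  have hR : ∀ a ∈ Req k t, a ∈ fixedSpan k (qx k) (qy k) := fun _ ha =>
    mem_fixedSpan_of_apply_eq (qx_pow_three k) (qy_pow_three k) (ofNat_three_eq_zero k) ht0 ht1
      (adjoin_qx_qy k) ha
  exact fun I hI => eq_bot_of_forall_mem_apply_eq_zero (qx_pow_three k) (qy_pow_three k) hR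
    hx2 hy2 hmix hx2y2 h1 h2 h3 h4 h5 hI
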